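/- arXiv:1104.2271 — 2 statements merged into one kernel-verified Lean document; each statement's English description precedes it below -/
import Mathlib

section
/- Define f : ℝ≥0 → ℝ by f(D) := ∫₀^∞ D(2t+1) / ((t+1)(t² + t + D)) dt. Then for every x > 0 one has f(x) ≤ 2x f′(x), where f′ denotes the derivative of f. -/
/-!
Substituting `u = t² + t` gives `f(D) = ∫₀^∞ w(u) D/(u + D) du` with
`w(u) = 2/(1 + √(1 + 4u))`, the value of `1/(t + 1)`, so `2x f'(x) - f(x) = x ∫₀^∞ g` with
`g(u) = w(u)(u - x)/(u + x)²`. The involution `u ↦ x²/u` of `(0, ∞)` turns `∫ g` into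
`∫ (x²/v²) g(x²/v) dv`, and `g(v) + (x²/v²) g(x²/v)` equals
`(v - x)(√v w(v) - √(x²/v) w(x²/v)) / (√v (v + x)²)`, which is nonnegative because `√u w(u)` is
increasing and `v - x`, `v - x²/v` have the same sign.
-/

open MeasureTheory Set Filter

noncomputable def fInt (D : ℝ) : ℝ :=
  ∫ t in Set.Ioi (0 : ℝ), D * (2 * t + 1) / ((t + 1) * (t ^ 2 + t + D))

lemma integrableOn_Ioi_of_continuousOn_of_le_div_sq {f : ℝ → ℝ} {C : ℝ}
    (hf : ContinuousOn f (Ici 0)) (hb : ∀ t ≥ 1, |f t| ≤ C / t ^ 2) :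
    IntegrableOn f (Ioi 0) := by
  refine (LocallyIntegrableOn.integrableOn_of_isBigO_atTop (g := fun t : ℝ => t ^ (-2 : ℝ))
    (hf.locallyIntegrableOn measurableSet_Ici) ?_
    (integrableAtFilter_rpow_atTop_iff.mpr (by norm_num))).mono_set Ioi_subset_Ici_self
  refine Asymptotics.IsBigO.of_bound C ?_
  filter_upwards [eventually_ge_atTop 1] with t ht
  have ht0 : 0 < t := one_pos.trans_le ht
  rw [Real.norm_eq_abs, Real.norm_of_nonneg (by positivity), Real.rpow_neg ht0.le,
    Real.rpow_two, ← div_eq_mul_inv]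
  exact hb t ht

section ChangeOfVariables

variable {E : Type*} [NormedAddCommGroup E] [NormedSpace ℝ E]

lemma image_sq_add_self_Ioi : (fun t : ℝ => t ^ 2 + t) '' Ioi 0 = Ioi 0 := by
  refine Subset.antisymm (image_subset_iff.2 fun t (ht : (0 : ℝ) < t) => ?_)
    fun u (hu : 0 < u) => ?_
  · show 0 < t ^ 2 + t
    positivity
  have hs : √(1 + 4 * u) ^ 2 = 1 + 4 * u := Real.sq_sqrt (by positivity)
  have hs1 : 1 < √(1 + 4 * u) := by nlinarith [Real.sqrt_nonneg (1 + 4 * u)]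
  exact ⟨(√(1 + 4 * u) - 1) / 2, by simp only [mem_Ioi]; linarith, by simp only; nlinarith⟩

lemma strictMonoOn_sq_add_self_Ioi : StrictMonoOn (fun t : ℝ => t ^ 2 + t) (Ioi 0) :=
  fun a (ha : 0 < a) b _ hab => by simp only; nlinarith

lemma hasDerivAt_sq_add_self (t : ℝ) : HasDerivAt (fun t : ℝ => t ^ 2 + t) (2 * t + 1) t :=
  ((hasDerivAt_pow 2 t).add (hasDerivAt_id' t)).congr_deriv (by norm_num)

theorem integral_comp_sq_add_self_Ioi (f : ℝ → E) :
    ∫ t in Ioi 0, (2 * t + 1) • f (t ^ 2 + t) = ∫ u in Ioi 0, f u := by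
  have h := integral_image_eq_integral_abs_deriv_smul (F := E) measurableSet_Ioi
    (fun t _ => (hasDerivAt_sq_add_self t).hasDerivWithinAt)
    strictMonoOn_sq_add_self_Ioi.injOn f
  rw [image_sq_add_self_Ioi] at h
  rw [h]
  refine setIntegral_congr_fun measurableSet_Ioi fun t (ht : (0 : ℝ) < t) => ?_
  rw [abs_of_pos (by positivity : (0 : ℝ) < 2 * t + 1)]

theorem integrableOn_Ioi_comp_sq_add_self_iff (f : ℝ → E) :
    IntegrableOn (fun t => (2 * t + 1) • f (t ^ 2 + t)) (Ioi 0) ↔ IntegrableOn f (Ioi 0) := by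
  have h := integrableOn_image_iff_integrableOn_abs_deriv_smul (F := E) measurableSet_Ioi
    (fun t _ => (hasDerivAt_sq_add_self t).hasDerivWithinAt)
    strictMonoOn_sq_add_self_Ioi.injOn f
  rw [image_sq_add_self_Ioi] at h
  rw [h]
  refine integrableOn_congr_fun (fun t (ht : (0 : ℝ) < t) => ?_) measurableSet_Ioi
  rw [abs_of_pos (by positivity : (0 : ℝ) < 2 * t + 1)]

lemma image_const_div_Ioi {c : ℝ} (hc : 0 < c) : (fun v : ℝ => c / v) '' Ioi 0 = Ioi 0 :=
  Subset.antisymm (image_subset_iff.2 fun _ hv => div_pos hc hv)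
    fun u (hu : 0 < u) => ⟨c / u, div_pos hc hu, div_div_cancel₀ hc.ne'⟩

lemma injOn_const_div_Ioi {c : ℝ} (hc : 0 < c) : InjOn (fun v : ℝ => c / v) (Ioi 0) :=
  fun a _ b _ hab => by simpa [div_eq_mul_inv, hc.ne'] using hab

lemma hasDerivAt_const_div {c v : ℝ} (hv : v ≠ 0) :
    HasDerivAt (fun v : ℝ => c / v) (-(c / v ^ 2)) v := by
  simpa [div_eq_mul_inv] using (hasDerivAt_inv hv).const_mul c

theorem integral_comp_const_div_Ioi (f : ℝ → E) {c : ℝ} (hc : 0 < c) :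
    ∫ v in Ioi 0, (c / v ^ 2) • f (c / v) = ∫ u in Ioi 0, f u := by
  have h := integral_image_eq_integral_abs_deriv_smul (F := E) measurableSet_Ioi
    (fun v hv => (hasDerivAt_const_div (ne_of_gt hv)).hasDerivWithinAt)
    (injOn_const_div_Ioi hc) f
  rw [image_const_div_Ioi hc] at h
  rw [h]
  refine setIntegral_congr_fun measurableSet_Ioi fun v (hv : (0 : ℝ) < v) => ?_
  rw [abs_neg, abs_of_pos (by positivity : 0 < c / v ^ 2)]

theorem integrableOn_Ioi_comp_const_div_iff (f : ℝ → E) {c : ℝ} (hc : 0 < c) :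
    IntegrableOn (fun v => (c / v ^ 2) • f (c / v)) (Ioi 0) ↔ IntegrableOn f (Ioi 0) := by
  have h := integrableOn_image_iff_integrableOn_abs_deriv_smul (F := E) measurableSet_Ioi
    (fun v hv => (hasDerivAt_const_div (ne_of_gt hv)).hasDerivWithinAt)
    (injOn_const_div_Ioi hc) f
  rw [image_const_div_Ioi hc] at h
  rw [h]
  refine integrableOn_congr_fun (fun v (hv : (0 : ℝ) < v) => ?_) measurableSet_Ioi
  rw [abs_neg, abs_of_pos (by positivity : 0 < c / v ^ 2)]

end ChangeOfVariables

lemma add_div_sq_mul_comp_const_div_nonneg {h : ℝ → ℝ} {x v : ℝ} (hx : 0 < x) (hv : 0 < v)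
    (hh : MonotoneOn (fun u => √u * h u) (Ioi 0)) :
    0 ≤ h v * (v - x) / (v + x) ^ 2 +
      x ^ 2 / v ^ 2 * (h (x ^ 2 / v) * (x ^ 2 / v - x) / (x ^ 2 / v + x) ^ 2) := by
  have hw : 0 < x ^ 2 / v := by positivity
  have hsv : 0 < √v := Real.sqrt_pos.2 hv
  have hsw : √(x ^ 2 / v) = x / √v := by rw [Real.sqrt_div' _ hv.le, Real.sqrt_sq hx.le]
  have hkey : 0 ≤ (v - x) * (√v * h v - √(x ^ 2 / v) * h (x ^ 2 / v)) := by
    rcases le_total x v with hxv | hvx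
    · refine mul_nonneg (sub_nonneg.2 hxv) (sub_nonneg.2 (hh hw hv ?_))
      rw [div_le_iff₀ hv]; nlinarith
    · refine mul_nonneg_of_nonpos_of_nonpos (sub_nonpos.2 hvx) (sub_nonpos.2 (hh hv hw ?_))
      rw [le_div_iff₀ hv]; nlinarith
  have hsq : √v ^ 2 = v := Real.sq_sqrt hv.le
  calc (0 : ℝ)
      ≤ (v - x) * (√v * h v - √(x ^ 2 / v) * h (x ^ 2 / v)) / (√v * (v + x) ^ 2) := by positivity
    _ = _ := by
      rw [hsw]
      set s := √v
      rw [← hsq]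
      field_simp
      ring

theorem integral_mul_sub_div_sq_nonneg {h : ℝ → ℝ} {x : ℝ} (hx : 0 < x)
    (hh : MonotoneOn (fun u => √u * h u) (Ioi 0))
    (hint : IntegrableOn (fun u => h u * (u - x) / (u + x) ^ 2) (Ioi 0)) :
    0 ≤ ∫ u in Ioi 0, h u * (u - x) / (u + x) ^ 2 := by
  set g := fun u => h u * (u - x) / (u + x) ^ 2
  have hx2 : 0 < x ^ 2 := by positivity
  have hsum :
      2 * ∫ u in Ioi 0, g u = ∫ v in Ioi 0, (g v + (x ^ 2 / v ^ 2) • g (x ^ 2 / v)) := by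
    rw [integral_add hint ((integrableOn_Ioi_comp_const_div_iff g hx2).2 hint),
      integral_comp_const_div_Ioi g hx2]
    ring
  have : 0 ≤ ∫ v in Ioi 0, (g v + (x ^ 2 / v ^ 2) • g (x ^ 2 / v)) :=
    setIntegral_nonneg measurableSet_Ioi fun _ hv => add_div_sq_mul_comp_const_div_nonneg hx hv hh
  linarith

noncomputable section

namespace fInt

def integrand (D t : ℝ) : ℝ := D * (2 * t + 1) / ((t + 1) * (t ^ 2 + t + D))

def integrandDeriv (D t : ℝ) : ℝ :=
  (2 * t + 1) * (t ^ 2 + t) / ((t + 1) * (t ^ 2 + t + D) ^ 2)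

variable {D t : ℝ}

lemma integrand_nonneg (hD : 0 ≤ D) (ht : 0 ≤ t) : 0 ≤ integrand D t := by
  unfold integrand; positivity

lemma integrandDeriv_nonneg (ht : 0 ≤ t) : 0 ≤ integrandDeriv D t := by
  unfold integrandDeriv; positivity

lemma integrableOn_integrand (hD : 0 < D) : IntegrableOn (integrand D) (Ioi 0) := by
  refine integrableOn_Ioi_of_continuousOn_of_le_div_sq (C := 2 * D) ?_ fun t ht => ?_
  · exact (Continuous.continuousOn (by fun_prop)).div (by fun_prop)
      fun t (ht : 0 ≤ t) => by positivity
  · have ht0 : 0 < t := one_pos.trans_le ht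
    rw [abs_of_nonneg (integrand_nonneg hD.le ht0.le), integrand,
      div_le_div_iff₀ (by positivity) (by positivity)]
    nlinarith [mul_pos hD ht0, mul_pos (mul_pos hD ht0) ht0, mul_pos (mul_pos hD hD) ht0]

lemma integrableOn_integrandDeriv (hD : 0 < D) : IntegrableOn (integrandDeriv D) (Ioi 0) := by
  refine integrableOn_Ioi_of_continuousOn_of_le_div_sq (C := 2) ?_ fun t ht => ?_
  · exact (Continuous.continuousOn (by fun_prop)).div (by fun_prop)
      fun t (ht : 0 ≤ t) => by positivity
  · have ht0 : 0 < t := one_pos.trans_le ht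
    rw [abs_of_nonneg (integrandDeriv_nonneg ht0.le), integrandDeriv,
      div_le_div_iff₀ (by positivity) (by positivity)]
    have hsq : (t ^ 2 + t) * t ^ 2 ≤ (t ^ 2 + t + D) ^ 2 := by
      rw [sq (t ^ 2 + t + D)]
      exact mul_le_mul (by linarith) (by linarith) (by positivity) (by positivity)
    calc (2 * t + 1) * (t ^ 2 + t) * t ^ 2 = (2 * t + 1) * ((t ^ 2 + t) * t ^ 2) := by ring
      _ ≤ 2 * (t + 1) * (t ^ 2 + t + D) ^ 2 :=
        mul_le_mul (by linarith) hsq (by positivity) (by positivity)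
      _ = 2 * ((t + 1) * (t ^ 2 + t + D) ^ 2) := by ring

lemma integrandDeriv_le_of_le {D' : ℝ} (hD : 0 < D) (hDD' : D ≤ D') (ht : 0 ≤ t) :
    integrandDeriv D' t ≤ integrandDeriv D t := by
  unfold integrandDeriv
  gcongr

lemma hasDerivAt_integrand (hD : 0 < D) (ht : 0 ≤ t) :
    HasDerivAt (integrand · t) (integrandDeriv D t) D := by
  have hden : HasDerivAt (fun D => (t + 1) * (t ^ 2 + t + D)) (t + 1) D := by
    simpa using ((hasDerivAt_id D).const_add (t ^ 2 + t)).const_mul (t + 1)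
  refine (((hasDerivAt_id' D).mul_const (2 * t + 1)).div hden (by positivity)).congr_deriv ?_
  unfold integrandDeriv
  field_simp
  ring

theorem hasDerivAt {x : ℝ} (hx : 0 < x) :
    HasDerivAt fInt (∫ t in Ioi 0, integrandDeriv x t) x := by
  have hball : ∀ D ∈ Metric.ball x (x / 2), x / 2 < D := fun D hD => by
    rw [Metric.mem_ball, Real.dist_eq, abs_lt] at hD; linarith
  refine (hasDerivAt_integral_of_dominated_loc_of_deriv_le (F := integrand)
    (bound := integrandDeriv (x / 2)) (Metric.ball_mem_nhds x (half_pos hx))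
    (Eventually.of_forall fun D =>
      (by unfold integrand; fun_prop : Measurable _).aestronglyMeasurable)
    (integrableOn_integrand hx) (integrableOn_integrandDeriv hx).aestronglyMeasurable ?_
    (integrableOn_integrandDeriv (half_pos hx)) ?_).2
  · filter_upwards [ae_restrict_mem measurableSet_Ioi] with t (ht : 0 < t) D hD
    rw [Real.norm_of_nonneg (integrandDeriv_nonneg ht.le)]
    exact integrandDeriv_le_of_le (half_pos hx) (hball D hD).le ht.le
  · filter_upwards [ae_restrict_mem measurableSet_Ioi] with t (ht : 0 < t) D hD
    exact hasDerivAt_integrand ((half_pos hx).trans (hball D hD)) ht.le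

def weight (u : ℝ) : ℝ := 2 / (1 + √(1 + 4 * u))

lemma weight_sq_add_self (ht : 0 ≤ t) : weight (t ^ 2 + t) = (t + 1)⁻¹ := by
  rw [weight, show 1 + 4 * (t ^ 2 + t) = (2 * t + 1) ^ 2 by ring, Real.sqrt_sq (by linarith)]
  field_simp
  ring

lemma monotoneOn_sqrt_mul_weight : MonotoneOn (fun u => √u * weight u) (Ioi 0) := by
  intro u (hu : 0 < u) v (hv : 0 < v) huv
  simp only [weight, mul_div_assoc']
  rw [div_le_div_iff₀ (by positivity) (by positivity)]
  have h1 : √u ≤ √v := Real.sqrt_le_sqrt huv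
  have h2 : √u * √(1 + 4 * v) ≤ √v * √(1 + 4 * u) := by
    rw [← Real.sqrt_mul hu.le, ← Real.sqrt_mul hv.le]
    exact Real.sqrt_le_sqrt (by nlinarith)
  nlinarith

lemma smul_weight_comp_sq_add_self {x : ℝ} (hx : 0 < x) (ht : 0 ≤ t) :
    (2 * t + 1) • (weight (t ^ 2 + t) * (t ^ 2 + t - x) / (t ^ 2 + t + x) ^ 2) =
      x⁻¹ * (2 * x * integrandDeriv x t - integrand x t) := by
  rw [smul_eq_mul, weight_sq_add_self ht, integrandDeriv, integrand]
  field_simp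
  ring

lemma integrableOn_weight_mul_sub_div_sq {x : ℝ} (hx : 0 < x) :
    IntegrableOn (fun u => weight u * (u - x) / (u + x) ^ 2) (Ioi 0) := by
  refine (integrableOn_Ioi_comp_sq_add_self_iff _).1 ?_
  refine IntegrableOn.congr_fun ?_
    (fun t (ht : (0 : ℝ) < t) => (smul_weight_comp_sq_add_self hx ht.le).symm) measurableSet_Ioi
  exact (((integrableOn_integrandDeriv hx).const_mul (2 * x)).sub
    (integrableOn_integrand hx)).const_mul x⁻¹

lemma two_mul_deriv_sub_eq {x : ℝ} (hx : 0 < x) :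
    2 * x * deriv fInt x - fInt x = x * ∫ u in Ioi 0, weight u * (u - x) / (u + x) ^ 2 := by
  rw [← integral_comp_sq_add_self_Ioi, setIntegral_congr_fun measurableSet_Ioi
      fun t (ht : (0 : ℝ) < t) => smul_weight_comp_sq_add_self hx ht.le,
    integral_const_mul, integral_sub ((integrableOn_integrandDeriv hx).const_mul (2 * x))
      (integrableOn_integrand hx), integral_const_mul, mul_inv_cancel_left₀ hx.ne',
    (hasDerivAt hx).deriv]
  rfl

end fInt

end

/-- The function `f` satisfies `f(x) ≤ 2x f′(x)` for every `x > 0`. -/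
theorem fInt_le_two_mul_deriv {x : ℝ} (hx : 0 < x) :
    fInt x ≤ 2 * x * deriv fInt x := by
  have := mul_nonneg hx.le (integral_mul_sub_div_sq_nonneg hx fInt.monotoneOn_sqrt_mul_weight
    (fInt.integrableOn_weight_mul_sub_div_sq hx))
  rw [← fInt.two_mul_deriv_sub_eq hx] at this
  linarith
end

section
/- Let ρ₁ and ρ₂ be invertible density matrices of dimension d and let p₁, p₂ ≥ 0. Define √(ρ₁ρ₂) := ρ₁^{1/2} (ρ₁^{1/2} ρ₂ ρ₁^{1/2})^{1/2} ρ₁^{−1/2} and √(ρ₂ρ₁) := ρ₂^{1/2} (ρ₂^{1/2} ρ₁ ρ₂^{1/2})^{1/2} ρ₂^{−1/2}. Then the 2d×2d block matrix X = [[p₁ρ₁, √(p₁p₂) √(ρ₁ρ₂)], [√(p₁p₂) √(ρ₂ρ₁), p₂ρ₂]] is positive semidefinite. -/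
/-!
With `A = ρ₁^{1/2}` and `S = (A ρ₂ A)^{1/2}` one has `√(ρ₁ρ₂) = A S A⁻¹`. The polar identity
`M⁻¹ (M M*)^{1/2} M = (M* M)^{1/2}`, applied to `M = ρ₁^{1/2} ρ₂^{1/2}`, gives
`√(ρ₂ρ₁) = A⁻¹ S A = √(ρ₁ρ₂)*`. Hence the block matrix is the Gram matrix `N* N` of
`N = [√p₁ A, √p₂ S A⁻¹]`.
-/

open scoped Classical

open Matrix ComplexOrder

/-- The positive semidefinite square root of a matrix: the unique PSD square root
when the matrix is PSD, and `0` otherwise. -/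
noncomputable def msqrt {n : Type*} [Fintype n] [DecidableEq n]
    (A : Matrix n n ℂ) : Matrix n n ℂ :=
  if h : A.PosSemidef then
    (h.1.eigenvectorUnitary : Matrix n n ℂ) * diagonal ((↑) ∘ (Real.sqrt ∘ h.1.eigenvalues)) *
      (star h.1.eigenvectorUnitary : Matrix n n ℂ)
  else 0

/-- `√(ρ₁ρ₂) := ρ₁^{1/2} (ρ₁^{1/2} ρ₂ ρ₁^{1/2})^{1/2} ρ₁^{−1/2}`, the square root of the
product of two (invertible) positive semidefinite matrices. -/
noncomputable def sqrtProd {n : Type*} [Fintype n] [DecidableEq n]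
    (ρ₁ ρ₂ : Matrix n n ℂ) : Matrix n n ℂ :=
  msqrt ρ₁ * msqrt (msqrt ρ₁ * ρ₂ * msqrt ρ₁) * (msqrt ρ₁)⁻¹

namespace CFC

variable {A : Type*} [PartialOrder A] [Ring A] [StarRing A] [TopologicalSpace A] [Algebra ℝ A]
  [StarOrderedRing A] [ContinuousFunctionalCalculus ℝ A IsSelfAdjoint] [NonnegSpectrumClass ℝ A]
  [IsSemitopologicalRing A] [T2Space A]

theorem units_inv_mul_sqrt_mul_star_mul (u : Aˣ) :
    (↑u⁻¹ : A) * sqrt (u * star (u : A)) * u = sqrt (star (u : A) * u) := by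
  have hnonneg : 0 ≤ (u : A) * star (u : A) := mul_star_self_nonneg _
  obtain ⟨p, hp⟩ : IsUnit (sqrt ((u : A) * star (u : A))) :=
    (isUnit_sqrt_iff _ hnonneg).2 (u.isUnit.mul u.isUnit.star)
  have hpp : (p : A) * p = u * star (u : A) := hp ▸ sqrt_mul_sqrt_self _ hnonneg
  -- `u⁻¹ p u = star u * p⁻¹ * u` is a congruence of the positive `p⁻¹`
  have hswap : (↑u⁻¹ : A) * p = star (u : A) * ↑p⁻¹ := calc
    (↑u⁻¹ : A) * p = ↑u⁻¹ * (p * p) * ↑p⁻¹ := by rw [mul_assoc, Units.mul_inv_cancel_right]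
    _ = star (u : A) * ↑p⁻¹ := by rw [hpp, ← mul_assoc, Units.inv_mul, one_mul]
  rw [← hp]
  refine (sqrt_unique ?_ ?_).symm
  · calc (↑u⁻¹ * p * u : A) * (↑u⁻¹ * p * u) = ↑u⁻¹ * (p * p) * u := by
          simp only [mul_assoc, Units.mul_inv_cancel_left]
      _ = star (u : A) * u := by rw [hpp, ← mul_assoc, Units.inv_mul, one_mul]
  · rw [hswap]
    exact star_left_conjugate_nonneg (inv_nonneg_of_nonneg p (hp ▸ sqrt_nonneg _)) _

end CFC

section Msqrt

open scoped MatrixOrder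

variable {n : Type*} [Fintype n] [DecidableEq n]

theorem msqrt_eq_cfcSqrt (A : Matrix n n ℂ) : msqrt A = CFC.sqrt A := by
  by_cases h : A.PosSemidef
  · rw [msqrt, dif_pos h, CFC.sqrt_eq_cfc, cfc_nnreal_eq_real _ A, h.1.cfc_eq, IsHermitian.cfc,
      Unitary.conjStarAlgAut_apply]
    congr 3
    funext i
    simp [h.eigenvalues_nonneg i]
  · rw [msqrt, dif_neg h, CFC.sqrt_of_not_nonneg (mt LE.le.posSemidef h)]

theorem posSemidef_msqrt (A : Matrix n n ℂ) : (msqrt A).PosSemidef := by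
  rw [msqrt_eq_cfcSqrt]
  exact (CFC.sqrt_nonneg A).posSemidef

theorem msqrt_mul_self {A : Matrix n n ℂ} (hA : A.PosSemidef) : msqrt A * msqrt A = A := by
  rw [msqrt_eq_cfcSqrt]
  exact CFC.sqrt_mul_sqrt_self A hA.nonneg

theorem isUnit_msqrt {A : Matrix n n ℂ} (hA : A.PosSemidef) (hAinv : IsUnit A.det) :
    IsUnit (msqrt A) := by
  rwa [msqrt_eq_cfcSqrt, CFC.isUnit_sqrt_iff A hA.nonneg, isUnit_iff_isUnit_det]

theorem sqrtProd_swap {ρ₁ ρ₂ : Matrix n n ℂ} (h₁ : ρ₁.PosSemidef) (h₁inv : IsUnit ρ₁.det)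
    (h₂ : ρ₂.PosSemidef) (h₂inv : IsUnit ρ₂.det) :
    sqrtProd ρ₂ ρ₁ = (sqrtProd ρ₁ ρ₂)ᴴ := by
  obtain ⟨a, ha⟩ := isUnit_msqrt h₁ h₁inv
  obtain ⟨b, hb⟩ := isUnit_msqrt h₂ h₂inv
  have hA : (a : Matrix n n ℂ)ᴴ = a := ha ▸ (posSemidef_msqrt ρ₁).1
  have hB : (b : Matrix n n ℂ)ᴴ = b := hb ▸ (posSemidef_msqrt ρ₂).1
  have hρ₁ : (a * a : Matrix n n ℂ) = ρ₁ := ha ▸ msqrt_mul_self h₁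
  have hρ₂ : (b * b : Matrix n n ℂ) = ρ₂ := hb ▸ msqrt_mul_self h₂
  have hpolar := CFC.units_inv_mul_sqrt_mul_star_mul (a * b)
  simp only [Units.val_mul, star_mul, star_eq_conjTranspose, hA, hB, _root_.mul_inv_rev] at hpolar
  rw [sqrtProd, sqrtProd, ← ha, ← hb, ← hρ₁, ← hρ₂, msqrt_eq_cfcSqrt, msqrt_eq_cfcSqrt]
  simp only [mul_assoc] at hpolar ⊢
  rw [← hpolar, conjTranspose_mul, conjTranspose_mul, conjTranspose_nonsing_inv, hA,
    (CFC.sqrt_nonneg _).posSemidef.1.eq]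
  simp only [← coe_units_inv, mul_assoc, Units.mul_inv_cancel_left, Units.mul_inv, mul_one]

end Msqrt

section Gram

variable {m n₁ n₂ 𝕜 : Type*} [Fintype m] [Fintype n₁] [Fintype n₂] [RCLike 𝕜]

theorem Matrix.posSemidef_fromBlocks_gram (P : Matrix m n₁ 𝕜) (Q : Matrix m n₂ 𝕜) :
    (fromBlocks (Pᴴ * P) (Pᴴ * Q) (Qᴴ * P) (Qᴴ * Q)).PosSemidef := by
  rw [← fromRows_mul_fromCols, ← conjTranspose_fromCols_eq_fromRows_conjTranspose]
  exact posSemidef_conjTranspose_mul_self _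

theorem Matrix.posSemidef_fromBlocks_smul_gram (P : Matrix m n₁ 𝕜) (Q : Matrix m n₂ 𝕜)
    {a b : ℝ} (ha : 0 ≤ a) (hb : 0 ≤ b) :
    (fromBlocks ((a : 𝕜) • (Pᴴ * P)) ((√(a * b) : 𝕜) • (Pᴴ * Q))
      ((√(a * b) : 𝕜) • (Pᴴ * Q)ᴴ) ((b : 𝕜) • (Qᴴ * Q))).PosSemidef := by
  have hsq (x : ℝ) (hx : 0 ≤ x) : (x : 𝕜) = √x * √x := by
    rw [← RCLike.ofReal_mul, Real.mul_self_sqrt hx]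
  rw [Real.sqrt_mul ha, RCLike.ofReal_mul, hsq a ha, hsq b hb]
  convert posSemidef_fromBlocks_gram ((√a : 𝕜) • P) ((√b : 𝕜) • Q) using 2 <;>
    simp only [conjTranspose_smul, RCLike.star_def, RCLike.conj_ofReal, Matrix.smul_mul,
      Matrix.mul_smul, smul_smul, conjTranspose_mul, conjTranspose_conjTranspose, mul_comm]

end Gram

theorem blockMatrix_sqrtProd_posSemidef_general {d : ℕ}
    {ρ₁ ρ₂ : Matrix (Fin d) (Fin d) ℂ}
    (h₁ : ρ₁.PosSemidef) (h₁inv : IsUnit ρ₁.det)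
    (h₂ : ρ₂.PosSemidef) (h₂inv : IsUnit ρ₂.det)
    {p₁ p₂ : ℝ} (hp₁ : 0 ≤ p₁) (hp₂ : 0 ≤ p₂) :
    (Matrix.fromBlocks
        ((p₁ : ℂ) • ρ₁) ((Real.sqrt (p₁ * p₂) : ℂ) • sqrtProd ρ₁ ρ₂)
        ((Real.sqrt (p₁ * p₂) : ℂ) • sqrtProd ρ₂ ρ₁) ((p₂ : ℂ) • ρ₂)).PosSemidef := by
  set A := msqrt ρ₁
  set S := msqrt (A * ρ₂ * A)
  have hA : Aᴴ = A := (posSemidef_msqrt ρ₁).1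
  have hAinv : IsUnit A.det := (isUnit_iff_isUnit_det _).1 (isUnit_msqrt h₁ h₁inv)
  have hSS : S * S = A * ρ₂ * A := by
    refine msqrt_mul_self ?_
    simpa only [hA] using h₂.conjTranspose_mul_mul_same A
  have hρ₁ : Aᴴ * A = ρ₁ := by rw [hA, msqrt_mul_self h₁]
  have hρ₂ : (S * A⁻¹)ᴴ * (S * A⁻¹) = ρ₂ := by
    rw [conjTranspose_mul, conjTranspose_nonsing_inv, hA, (posSemidef_msqrt _).1.eq, mul_assoc,
      ← mul_assoc S, hSS, mul_assoc, mul_nonsing_inv _ hAinv, mul_one,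
      nonsing_inv_mul_cancel_left _ _ hAinv]
  have hY : Aᴴ * (S * A⁻¹) = sqrtProd ρ₁ ρ₂ := by rw [hA, ← mul_assoc]; rfl
  rw [sqrtProd_swap h₁ h₁inv h₂ h₂inv]
  have hX := posSemidef_fromBlocks_smul_gram A (S * A⁻¹) hp₁ hp₂
  rw [hρ₁, hρ₂, hY] at hX
  exact hX

/-- For invertible density matrices `ρ₁`, `ρ₂` and weights `p₁, p₂ ≥ 0`, the block matrix
`[[p₁ρ₁, √(p₁p₂)√(ρ₁ρ₂)], [√(p₁p₂)√(ρ₂ρ₁), p₂ρ₂]]` is positive semidefinite. -/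
theorem blockMatrix_sqrtProd_posSemidef {d : ℕ}
    {ρ₁ ρ₂ : Matrix (Fin d) (Fin d) ℂ}
    (h₁ : ρ₁.PosSemidef) (h₁t : ρ₁.trace = 1) (h₁inv : IsUnit ρ₁.det)
    (h₂ : ρ₂.PosSemidef) (h₂t : ρ₂.trace = 1) (h₂inv : IsUnit ρ₂.det)
    {p₁ p₂ : ℝ} (hp₁ : 0 ≤ p₁) (hp₂ : 0 ≤ p₂) :
    (Matrix.fromBlocks
        ((p₁ : ℂ) • ρ₁) ((Real.sqrt (p₁ * p₂) : ℂ) • sqrtProd ρ₁ ρ₂)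
        ((Real.sqrt (p₁ * p₂) : ℂ) • sqrtProd ρ₂ ρ₁) ((p₂ : ℂ) • ρ₂)).PosSemidef :=
  blockMatrix_sqrtProd_posSemidef_general h₁ h₁inv h₂ h₂inv hp₁ hp₂
end
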